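/- Let Γ be a finite connected simple graph with negative definite intersection matrix M (m_{ij} = 1 for edges, m_{ii} = e_i²), and let Z = Σ z_i e_i be the fundamental cycle. Suppose there is a vertex i₀ with z_{i₀} = 2, (Z - e_{i₀})·e_{i₀} = 1, and (Z - e_i)·e_i = 2 for all i ≠ i₀. Let e_1,…,e_r be the neighbors of i₀ and assume z_j = 1 for 1 ≤ j ≤ r. Then the vertex set of Γ is exactly {i₀, 1, …, r}, each e_j (1 ≤ j ≤ r) is adjacent only to i₀, and e_{i₀}² = -r + 1. -/

import Mathlib

/-!
Write `N(i)` for the sum of `Z` over the neighbours of `i`; off the diagonal `M` is the adjacency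
matrix, so `(Z - e_i)·e_i = (Z i - 1) e_i² + N(i)`. At a neighbour `ν j` of `i₀` (where `Z = 1`)
the hypothesis gives `N(ν j) = 2 = Z i₀`, so `i₀` is its only neighbour, since anti-nefness makes
`Z ≥ 1` propagate along edges. Connectedness then forces the graph to be the star around `i₀`,
where `N(i₀) = r` and the condition at `i₀` reads `e_{i₀}² + r = 1`.
-/

/-- The pairing `x·y = xᵗ M y` over `ℤ`. -/
def pairZ {n : ℕ} (M : Matrix (Fin n) (Fin n) ℤ) (x y : Fin n → ℤ) : ℤ :=
  dotProduct x (M.mulVec y)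

open Finset

theorem SimpleGraph.Connected.induction_on_adj {V : Type*} {G : SimpleGraph V} (hG : G.Connected)
    {P : V → Prop} {u : V} (hu : P u) (step : ∀ a b, G.Adj a b → P a → P b) (v : V) : P v := by
  induction (G.reachable_iff_reflTransGen u v).1 (hG u v) with
  | refl => exact hu
  | tail _ hab ih => exact step _ _ hab ih

theorem SimpleGraph.add_le_sum_neighborFinset {V : Type*} [Fintype V] {G : SimpleGraph V}
    [DecidableRel G.Adj] {x : V → ℤ} (hx : ∀ i, 0 ≤ x i) {a b c : V} (hab : a ≠ b)
    (ha : G.Adj c a) (hb : G.Adj c b) : x a + x b ≤ ∑ k ∈ G.neighborFinset c, x k := by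
  classical
  rw [← sum_pair hab]
  refine sum_le_sum_of_subset_of_nonneg ?_ fun k _ _ => hx k
  intro k hk
  rcases mem_insert.1 hk with rfl | hk
  · exact (G.mem_neighborFinset _ _).2 ha
  · exact (mem_singleton.1 hk) ▸ (G.mem_neighborFinset _ _).2 hb

theorem SimpleGraph.sum_neighborFinset_eq_card {V : Type*} [Fintype V] {G : SimpleGraph V}
    [DecidableRel G.Adj] {i : V} {r : ℕ} {ν : Fin r → V} (hinj : Function.Injective ν)
    (hnbr : ∀ j, G.Adj i (ν j)) (hall : ∀ v, G.Adj i v → ∃ j, ν j = v) {x : V → ℤ}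
    (hx : ∀ j, x (ν j) = 1) : ∑ k ∈ G.neighborFinset i, x k = r := by
  classical
  have himage : G.neighborFinset i = univ.image ν := by
    ext v
    simp only [SimpleGraph.mem_neighborFinset, mem_image, mem_univ, true_and]
    exact ⟨hall v, fun ⟨j, hj⟩ => hj ▸ hnbr j⟩
  rw [himage, sum_image fun a _ b _ h => hinj h]
  simp [hx]

theorem pairZ_single_one {n : ℕ} (M : Matrix (Fin n) (Fin n) ℤ) (x : Fin n → ℤ) (i : Fin n) :
    pairZ M x (Pi.single i 1) = ∑ j, x j * M j i := by
  simp [pairZ, dotProduct]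

theorem pairZ_sub_single_one {n : ℕ} (M : Matrix (Fin n) (Fin n) ℤ) (x : Fin n → ℤ) (i : Fin n) :
    pairZ M (x - Pi.single i 1) (Pi.single i 1) = pairZ M x (Pi.single i 1) - M i i := by
  simp [pairZ, sub_dotProduct]

section AdjacencyMatrix

variable {n : ℕ} {G : SimpleGraph (Fin n)} [DecidableRel G.Adj] {M : Matrix (Fin n) (Fin n) ℤ}

theorem pairZ_single_one_of_adj (hadj : ∀ i j, i ≠ j → M i j = if G.Adj i j then 1 else 0)
    (x : Fin n → ℤ) (i : Fin n) :
    pairZ M x (Pi.single i 1) = x i * M i i + ∑ j ∈ G.neighborFinset i, x j := by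
  rw [pairZ_single_one, ← add_sum_erase _ _ (mem_univ i)]
  congr 1
  have hnbr : G.neighborFinset i = (univ.erase i).filter (G.Adj i) := by
    ext j
    simp only [SimpleGraph.mem_neighborFinset, mem_filter, mem_erase, mem_univ, and_true,
      iff_and_self]
    exact fun h => h.ne'
  rw [hnbr, sum_filter]
  refine sum_congr rfl fun j hj => ?_
  simp [hadj j i (ne_of_mem_erase hj), G.adj_comm]

theorem one_le_of_adj_of_pairZ_nonpos
    (hadj : ∀ i j, i ≠ j → M i j = if G.Adj i j then 1 else 0) {x : Fin n → ℤ}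
    (hx : ∀ i, 0 ≤ x i) {a b : Fin n} (hab : G.Adj a b) (hnef : pairZ M x (Pi.single b 1) ≤ 0)
    (ha : 1 ≤ x a) : 1 ≤ x b := by
  by_contra! hb
  have hb0 : x b = 0 := le_antisymm (by omega) (hx b)
  have hN : x a ≤ ∑ k ∈ G.neighborFinset b, x k :=
    single_le_sum (fun k _ => hx k) ((G.mem_neighborFinset _ _).2 hab.symm)
  rw [pairZ_single_one_of_adj hadj, hb0] at hnef
  omega

end AdjacencyMatrix

theorem stmt_11_general {n r : ℕ} (G : SimpleGraph (Fin n)) [DecidableRel G.Adj]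
    (hconn : G.Connected)
    (M : Matrix (Fin n) (Fin n) ℤ)
    (hadj : ∀ i j, i ≠ j → M i j = if G.Adj i j then 1 else 0)
    (Z : Fin n → ℤ) (hZeff : ∀ i, 0 ≤ Z i)
    (hZnef : ∀ i, pairZ M Z (Pi.single i 1) ≤ 0)
    (i₀ : Fin n) (hz₀ : Z i₀ = 2)
    (h1 : pairZ M (Z - Pi.single i₀ 1) (Pi.single i₀ 1) = 1)
    (h2 : ∀ i, i ≠ i₀ → pairZ M (Z - Pi.single i 1) (Pi.single i 1) = 2)
    (ν : Fin r → Fin n) (hinj : Function.Injective ν)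
    (hnbr : ∀ j, G.Adj i₀ (ν j)) (hall : ∀ v, G.Adj i₀ v → ∃ j, ν j = v)
    (hred : ∀ j, Z (ν j) = 1) :
    (∀ v : Fin n, v = i₀ ∨ ∃ j, ν j = v) ∧
    (∀ j v, G.Adj (ν j) v → v = i₀) ∧
    M i₀ i₀ = -(r : ℤ) + 1 := by
  have hpair := pairZ_single_one_of_adj hadj Z
  have hsumν : ∀ j, ∑ k ∈ G.neighborFinset (ν j), Z k = 2 := fun j => by
    have := h2 (ν j) (hnbr j).ne'
    rw [pairZ_sub_single_one, hpair, hred] at this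
    linarith
  have hleaf : ∀ j v, G.Adj (ν j) v → v = i₀ := fun j v hv => by
    by_contra hne
    have hZv : 1 ≤ Z v := one_le_of_adj_of_pairZ_nonpos hadj hZeff hv (hZnef v) (hred j).ge
    have := G.add_le_sum_neighborFinset hZeff (Ne.symm hne) (hnbr j).symm hv
    linarith [hsumν j]
  refine ⟨hconn.induction_on_adj (Or.inl rfl) ?_, hleaf, ?_⟩
  · rintro a b hab (rfl | ⟨j, rfl⟩)
    exacts [Or.inr (hall b hab), Or.inl (hleaf j b hab)]
  · rw [pairZ_sub_single_one, hpair, hz₀, G.sum_neighborFinset_eq_card hinj hnbr hall hred] at h1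
    linarith

/-- Case (4.b) of the nearly Gorenstein criterion with reduced coefficients on
the neighbors of the distinguished vertex `i₀`: the graph consists exactly of
`i₀` and its `r` neighbors, each neighbor is adjacent only to `i₀`, and
`e_{i₀}² = -r + 1`. -/
theorem stmt_11 {n r : ℕ} (G : SimpleGraph (Fin n)) [DecidableRel G.Adj]
    (hconn : G.Connected)
    (M : Matrix (Fin n) (Fin n) ℤ) (hsym : M.IsSymm)
    (hadj : ∀ i j, i ≠ j → M i j = if G.Adj i j then 1 else 0)
    (hneg : ∀ x : Fin n → ℤ, x ≠ 0 → dotProduct x (M.mulVec x) < 0)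
    (Z : Fin n → ℤ) (hZne : Z ≠ 0) (hZeff : ∀ i, 0 ≤ Z i)
    (hZnef : ∀ i, pairZ M Z (Pi.single i 1) ≤ 0)
    (hZmin : ∀ D : Fin n → ℤ, D ≠ 0 → (∀ i, 0 ≤ D i) →
      (∀ i, pairZ M D (Pi.single i 1) ≤ 0) → ∀ i, Z i ≤ D i)
    (i₀ : Fin n) (hz₀ : Z i₀ = 2)
    (h1 : pairZ M (Z - Pi.single i₀ 1) (Pi.single i₀ 1) = 1)
    (h2 : ∀ i, i ≠ i₀ → pairZ M (Z - Pi.single i 1) (Pi.single i 1) = 2)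
    (ν : Fin r → Fin n) (hinj : Function.Injective ν)
    (hnbr : ∀ j, G.Adj i₀ (ν j)) (hall : ∀ v, G.Adj i₀ v → ∃ j, ν j = v)
    (hred : ∀ j, Z (ν j) = 1) :
    (∀ v : Fin n, v = i₀ ∨ ∃ j, ν j = v) ∧
    (∀ j v, G.Adj (ν j) v → v = i₀) ∧
    M i₀ i₀ = -(r : ℤ) + 1 :=
  stmt_11_general G hconn M hadj Z hZeff hZnef i₀ hz₀ h1 h2 ν hinj hnbr hall hred
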